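/- arXiv:math/0702718 — 2 statements merged into one kernel-verified Lean document; each statement's English description precedes it below -/
import Mathlib

section
/- Let Ω♭: V → V* come from a nondegenerate skew form Ω on a real vector space V, ω the induced 2-form on E = V⊕V* given by ω(e₁,e₂) = ⟨e₁, J e₂⟩ with J = [[0,−π♯],[Ω♭,0]], and λ: V⊗ℂ → L, X ↦ X − iΩ♭X the eigenspace identification. For a smooth family Ω_t of nondegenerate skew forms with associated J_t, L_t, λ_t, ω̇_t(a,b) := ⟨a, J̇_t b⟩, one has λ_t* ω̇_t = −Ω̇_t, i.e. ω̇_t(λ_t X, λ_t Y) = −Ω̇_t(X,Y) for all X,Y ∈ V⊗ℂ. -/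
open TensorProduct

set_option maxHeartbeats 1600000 in
/-- for a differentiable family `t ↦ Ω t` of nondegenerate
skew forms on a real vector space `V` (given via the maps `Ω♭ t : V → V*`
with inverses `π♯ t`), with associated generalized complex structures
`J t = [[0, −π♯ t],[Ω♭ t, 0]]` on `E = V ⊕ V*` and eigenspace
identifications `λ t : X ↦ X − i Ω♭ t X` into `ℂ ⊗ E`, the pullback by
`λ t` of `ω̇_t(a,b) := ⟨a, J̇_t b⟩` is `−Ω̇_t`:
`⟨λ_t X, J̇_t (λ_t Y)⟩ = −Ω̇_t(X,Y)` for all `X, Y ∈ ℂ ⊗ V`. -/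
theorem lambda_pullback_omegaDot
    (V : Type*) [NormedAddCommGroup V] [NormedSpace ℝ V] [FiniteDimensional ℝ V]
    (Ω Ω' : ℝ → V →L[ℝ] (V →L[ℝ] ℝ))
    (π π' : ℝ → (V →L[ℝ] ℝ) →L[ℝ] V)
    (hΩderiv : ∀ t, HasDerivAt Ω (Ω' t) t)
    (hπderiv : ∀ t, HasDerivAt π (π' t) t)
    (hskew : ∀ t x y, Ω t x y = -(Ω t y x))
    (hπΩ : ∀ t x, π t (Ω t x) = x)
    (hΩπ : ∀ t ξ, Ω t (π t ξ) = ξ)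
    (J Jd : ℝ → (V × (V →L[ℝ] ℝ)) →L[ℝ] (V × (V →L[ℝ] ℝ)))
    (hJ : ∀ s p, J s p = (-(π s p.2), Ω s p.1))
    (hJderiv : ∀ t, HasDerivAt J (Jd t) t)
    (B : LinearMap.BilinForm ℝ (V × (V →L[ℝ] ℝ)))
    (hB : ∀ p q, B p q = (1 / 2 : ℝ) * (p.2 q.1 + q.2 p.1))
    (Bd : ℝ → LinearMap.BilinForm ℝ V)
    (hBd : ∀ t x y, Bd t x y = Ω' t x y)
    (lam : ℝ → (ℂ ⊗[ℝ] V →ₗ[ℂ] ℂ ⊗[ℝ] (V × (V →L[ℝ] ℝ))))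
    (hlam : ∀ t x, lam t x
        = LinearMap.baseChange ℂ (LinearMap.inl ℝ V (V →L[ℝ] ℝ)) x
          - Complex.I • LinearMap.baseChange ℂ
              (LinearMap.inr ℝ V (V →L[ℝ] ℝ) ∘ₗ (Ω t : V →ₗ[ℝ] (V →L[ℝ] ℝ))) x) :
    ∀ (t : ℝ) (X Y : ℂ ⊗[ℝ] V),
      LinearMap.BilinForm.baseChange ℂ B (lam t X)
          (LinearMap.baseChange ℂ ((Jd t : (V × (V →L[ℝ] ℝ)) →ₗ[ℝ] (V × (V →L[ℝ] ℝ)))) (lam t Y))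
        = - LinearMap.BilinForm.baseChange ℂ (Bd t) X Y := by
  intro t X Y
  -- derivative of `fun s => Ω s x` and evaluations
  have hΩap : ∀ x, HasDerivAt (fun s => Ω s x) (Ω' t x) t := by
    intro x
    have := (hΩderiv t).clm_apply (hasDerivAt_const t x)
    simpa using this
  have hΩap2 : ∀ x y, HasDerivAt (fun s => Ω s x y) (Ω' t x y) t := by
    intro x y
    have := (hΩap x).clm_apply (hasDerivAt_const t y)
    simpa using this
  -- Ω' is skew
  have hΩ'skew : ∀ x y, Ω' t x y = -(Ω' t y x) := by
    intro x y
    have h2 : HasDerivAt (fun s => Ω s x y) (-(Ω' t y x)) t := by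
      have := (hΩap2 y x).fun_neg
      have he : (fun s => -(Ω s y x)) = fun s => Ω s x y := by
        funext s; exact (hskew s x y).symm
      rwa [he] at this
    exact (hΩap2 x y).unique h2
  -- differentiating Ω s (π s ξ) = ξ
  have hkey : ∀ ξ y, Ω t (π' t ξ) y = -(Ω' t (π t ξ) y) := by
    intro ξ y
    have hπap : HasDerivAt (fun s => π s ξ) (π' t ξ) t := by
      have := (hπderiv t).clm_apply (hasDerivAt_const t ξ)
      simpa using this
    have h1 : HasDerivAt (fun s => Ω s (π s ξ) y)
        ((Ω' t (π t ξ) + Ω t (π' t ξ)) y) t := by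
      have := ((hΩderiv t).clm_apply hπap).clm_apply (hasDerivAt_const t y)
      simpa using this
    have h2 : HasDerivAt (fun s => Ω s (π s ξ) y) 0 t := by
      have he : (fun s => Ω s (π s ξ) y) = fun _ => ξ y := by
        funext s; rw [hΩπ s ξ]
      rw [he]; exact hasDerivAt_const t (ξ y)
    have := h1.unique h2
    simp only [ContinuousLinearMap.add_apply] at this
    linarith
  -- the crucial identity Ω x (π' (Ω y)) = Ω' y x
  have hA : ∀ x y, Ω t x (π' t (Ω t y)) = Ω' t y x := by
    intro x y
    have h1 := hskew t x (π' t (Ω t y))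
    rw [h1, hkey (Ω t y) x, hπΩ t y]
    ring
  -- value of Jd
  have hJd : ∀ p, Jd t p = (-(π' t p.2), Ω' t p.1) := by
    intro p
    have h1 : HasDerivAt (fun s => J s p) (Jd t p) t := by
      have := (hJderiv t).clm_apply (hasDerivAt_const t p)
      simpa using this
    have h2 : HasDerivAt (fun s => J s p) (-(π' t p.2), Ω' t p.1) t := by
      have hπap : HasDerivAt (fun s => π s p.2) (π' t p.2) t := by
        have := (hπderiv t).clm_apply (hasDerivAt_const t p.2)
        simpa using this
      have := (hπap.fun_neg).prodMk (hΩap p.1)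
      have he : (fun s => (-(π s p.2), Ω s p.1)) = fun s => J s p := by
        funext s; exact (hJ s p).symm
      rwa [he] at this
    exact h1.unique h2
  -- now compute on pure tensors
  induction X using TensorProduct.induction_on with
  | zero => simp
  | add X₁ X₂ ih₁ ih₂ =>
      simp only [map_add, LinearMap.add_apply] at *
      rw [ih₁, ih₂]; ring
  | tmul a x =>
    induction Y using TensorProduct.induction_on with
    | zero => simp
    | add Y₁ Y₂ ih₁ ih₂ =>
        simp only [map_add, LinearMap.map_add, LinearMap.add_apply] at *
        rw [ih₁, ih₂]; ring
    | tmul b y =>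
      have e1 : Jd t ((y, 0) : V × (V →L[ℝ] ℝ)) = (0, Ω' t y) := by
        rw [hJd]; simp
      have e2 : Jd t ((0, Ω t y) : V × (V →L[ℝ] ℝ)) = (-(π' t (Ω t y)), 0) := by
        rw [hJd]; simp
      have hl : ∀ (c : ℂ) (z : V), lam t (c ⊗ₜ z)
          = c ⊗ₜ ((z, 0) : V × (V →L[ℝ] ℝ))
            - Complex.I • (c ⊗ₜ ((0, Ω t z) : V × (V →L[ℝ] ℝ))) := by
        intro c z
        rw [hlam]
        simp [LinearMap.baseChange_tmul]
      have hJb : LinearMap.baseChange ℂ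
            ((Jd t : (V × (V →L[ℝ] ℝ)) →ₗ[ℝ] (V × (V →L[ℝ] ℝ)))) (lam t (b ⊗ₜ y))
          = b ⊗ₜ ((0, Ω' t y) : V × (V →L[ℝ] ℝ))
            - Complex.I • (b ⊗ₜ ((-(π' t (Ω t y)), 0) : V × (V →L[ℝ] ℝ))) := by
        rw [hl]
        simp only [map_sub, map_smul, LinearMap.baseChange_tmul,
          ContinuousLinearMap.coe_coe, e1, e2]
      rw [hJb, hl]
      simp only [map_sub, map_smul, LinearMap.sub_apply, LinearMap.smul_apply,
        LinearMap.BilinForm.baseChange_tmul]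
      rw [hB, hB, hB, hB, hBd]
      simp only [ContinuousLinearMap.zero_apply, ContinuousLinearMap.neg_apply,
        ContinuousLinearMap.coe_zero, map_neg, map_zero, hA]
      rw [hΩ'skew x y]
      simp only [Complex.real_smul, smul_eq_mul]
      push_cast
      ring_nf
      simp [Complex.I_sq]
      ring
end

section
/- Let J be a generalized complex structure on TM⊕T*M over the unit ball U ⊂ ℝⁿ with matrix coefficients a^i_j(x) in the standard frame (e_i), and for t ∈ [0,1] define J_t by J_t e_j|_x = Σ_i a^i_j(tx) e_i|_x. If κ(A,B) := [JA, JB] − [A,B] − J([JA,B] + [A,JB]) denotes the Nijenhuis-type torsion, then the components of the torsion of J_t at x equal t times the corresponding components of the torsion of J at tx; in particular, if J is integrable on U then each J_t is integrable on U. -/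
namespace TorsionRescale

variable {n : ℕ}

abbrev V' (n : ℕ) := EuclideanSpace ℝ (Fin n)
abbrev F' (n : ℕ) := V' n × (V' n →L[ℝ] ℝ)

noncomputable def cour (A B : V' n → F' n) (x : V' n) : F' n :=
  (fderiv ℝ (fun y => (B y).1) x ((A x).1) - fderiv ℝ (fun y => (A y).1) x ((B x).1),
    (fderiv ℝ (fun y => (B y).2) x ((A x).1) + ((B x).2).comp (fderiv ℝ (fun y => (A y).1) x))
      - (fderiv ℝ (fun y => (A y).2) x ((B x).1) + ((A x).2).comp (fderiv ℝ (fun y => (B y).1) x))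
      + (1 / 2 : ℝ) • fderiv ℝ (fun y => (A y).2 ((B y).1) - (B y).2 ((A y).1)) x)

noncomputable def kap (Jf : V' n → (F' n →L[ℝ] F' n)) (A B : V' n → F' n) (x : V' n) : F' n :=
  cour (fun y => Jf y (A y)) (fun y => Jf y (B y)) x - cour A B x
    - Jf x (cour (fun y => Jf y (A y)) B x + cour A (fun y => Jf y (B y)) x)

lemma fderiv_scomp {E W : Type*} [NormedAddCommGroup E] [NormedSpace ℝ E]
    [NormedAddCommGroup W] [NormedSpace ℝ W] (f : E → W) (t : ℝ) (x : E)
    (hf : DifferentiableAt ℝ f (t • x)) :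
    fderiv ℝ (fun y => f (t • y)) x = t • fderiv ℝ f (t • x) := by
  have h2 : fderiv ℝ (fun y : E => t • y) x = t • ContinuousLinearMap.id ℝ E := by
    rw [fderiv_fun_const_smul differentiableAt_fun_id t, fderiv_id']
  have h := fderiv_comp (𝕜 := ℝ) x hf ((differentiable_id.const_smul t).differentiableAt)
  rw [h2] at h
  rw [show (fun y => f (t • y)) = f ∘ (fun y : E => t • y) from rfl, h]
  ext v
  simp

lemma cour_const (a b : F' n) (x : V' n) : cour (fun _ => a) (fun _ => b) x = 0 := by
  simp [cour, Prod.ext_iff]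

lemma cour_scale (A B : V' n → F' n) (t : ℝ) (x : V' n)
    (hA1 : DifferentiableAt ℝ (fun y => (A y).1) (t • x))
    (hA2 : DifferentiableAt ℝ (fun y => (A y).2) (t • x))
    (hB1 : DifferentiableAt ℝ (fun y => (B y).1) (t • x))
    (hB2 : DifferentiableAt ℝ (fun y => (B y).2) (t • x)) :
    cour (fun y => A (t • y)) (fun y => B (t • y)) x = t • cour A B (t • x) := by
  have e1 : fderiv ℝ (fun y => (B (t • y)).1) x = t • fderiv ℝ (fun y => (B y).1) (t • x) :=
    fderiv_scomp (fun z => (B z).1) t x hB1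
  have e2 : fderiv ℝ (fun y => (A (t • y)).1) x = t • fderiv ℝ (fun y => (A y).1) (t • x) :=
    fderiv_scomp (fun z => (A z).1) t x hA1
  have e3 : fderiv ℝ (fun y => (B (t • y)).2) x = t • fderiv ℝ (fun y => (B y).2) (t • x) :=
    fderiv_scomp (fun z => (B z).2) t x hB2
  have e4 : fderiv ℝ (fun y => (A (t • y)).2) x = t • fderiv ℝ (fun y => (A y).2) (t • x) :=
    fderiv_scomp (fun z => (A z).2) t x hA2
  have e5 : fderiv ℝ (fun y => (A (t • y)).2 ((B (t • y)).1) - (B (t • y)).2 ((A (t • y)).1)) x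
      = t • fderiv ℝ (fun y => (A y).2 ((B y).1) - (B y).2 ((A y).1)) (t • x) :=
    fderiv_scomp (fun z => (A z).2 ((B z).1) - (B z).2 ((A z).1)) t x
      ((hA2.clm_apply hB1).sub (hB2.clm_apply hA1))
  simp only [cour, e1, e2, e3, e4, e5, Prod.smul_mk, Prod.mk.injEq]
  constructor
  · simp only [ContinuousLinearMap.smul_apply]
    module
  · simp only [ContinuousLinearMap.smul_apply, ContinuousLinearMap.comp_smul]
    module

lemma main (Jm : V' n → (F' n →L[ℝ] F' n))
    (hsm : ContDiffOn ℝ (⊤ : ℕ∞) Jm (Metric.ball (0 : V' n) 1))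
    (t : ℝ) (ht : t ∈ Set.Icc (0 : ℝ) 1) (x : V' n) (hx : x ∈ Metric.ball (0 : V' n) 1)
    (a b : F' n) :
    kap (fun y => Jm (t • y)) (fun _ => a) (fun _ => b) x
      = t • kap Jm (fun _ => a) (fun _ => b) (t • x) := by
  have hball : t • x ∈ Metric.ball (0 : V' n) 1 := by
    rw [mem_ball_zero_iff] at hx ⊢
    rw [norm_smul]
    calc ‖t‖ * ‖x‖ ≤ 1 * ‖x‖ := by
          apply mul_le_mul_of_nonneg_right _ (norm_nonneg x)
          rw [Real.norm_eq_abs, abs_le]; exact ⟨by linarith [ht.1], ht.2⟩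
      _ < 1 := by rwa [one_mul]
  have hJ : DifferentiableAt ℝ Jm (t • x) :=
    (hsm.contDiffAt (Metric.isOpen_ball.mem_nhds hball)).differentiableAt (by simp)
  have hJa : DifferentiableAt ℝ (fun y => Jm y a) (t • x) :=
    hJ.clm_apply (differentiableAt_const a)
  have hJb : DifferentiableAt ℝ (fun y => Jm y b) (t • x) :=
    hJ.clm_apply (differentiableAt_const b)
  have h1 : cour (fun y => Jm (t • y) a) (fun y => Jm (t • y) b) x
      = t • cour (fun z => Jm z a) (fun z => Jm z b) (t • x) :=
    cour_scale (fun z => Jm z a) (fun z => Jm z b) t x hJa.fst hJa.snd hJb.fst hJb.snd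
  have h2 : cour (fun y => Jm (t • y) a) (fun _ => b) x
      = t • cour (fun z => Jm z a) (fun _ => b) (t • x) :=
    cour_scale (fun z => Jm z a) (fun _ => b) t x hJa.fst hJa.snd
      (differentiableAt_const _) (differentiableAt_const _)
  have h3 : cour (fun _ => a) (fun y => Jm (t • y) b) x
      = t • cour (fun _ => a) (fun z => Jm z b) (t • x) :=
    cour_scale (fun _ => a) (fun z => Jm z b) t x (differentiableAt_const _)
      (differentiableAt_const _) hJb.fst hJb.snd
  simp only [kap, h1, h2, h3, cour_const]
  rw [← smul_add, map_smul]
  module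

end TorsionRescale

/-- let `J` be a generalized complex structure on the standard
Courant algebroid `TU ⊕ T*U` over the unit ball `U ⊂ ℝⁿ`, described in the
standard constant frame by a (smooth) field of fiber endomorphisms
`Jm : U → End(ℝⁿ ⊕ (ℝⁿ)*)` with `Jm² = −id`, orthogonal for the canonical
pairing.  For `t ∈ [0,1]` let `J_t` be given by the rescaled coefficients,
i.e. by the field `x ↦ Jm (t•x)`.  Then the Nijenhuis-type torsion
`κ(A,B) = [JA,JB] − [A,B] − J([JA,B] + [A,JB])` of `J_t`, evaluated on frame
sections at `x`, equals `t` times the torsion of `J` at `tx`; in particular,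
if the torsion of `J` vanishes on `U` then each `J_t` has vanishing torsion
on `U`. -/
theorem torsion_rescaling (n : ℕ) :
    let V := EuclideanSpace ℝ (Fin n)
    let F := V × (V →L[ℝ] ℝ)
    -- Courant bracket of sections `V → F`, via Fréchet derivatives:
    let courant : (V → F) → (V → F) → (V → F) := fun A B x =>
      (fderiv ℝ (fun y => (B y).1) x ((A x).1) - fderiv ℝ (fun y => (A y).1) x ((B x).1),
        (fderiv ℝ (fun y => (B y).2) x ((A x).1) + ((B x).2).comp (fderiv ℝ (fun y => (A y).1) x))
          - (fderiv ℝ (fun y => (A y).2) x ((B x).1) + ((A x).2).comp (fderiv ℝ (fun y => (B y).1) x))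
          + (1 / 2 : ℝ) • fderiv ℝ (fun y => (A y).2 ((B y).1) - (B y).2 ((A y).1)) x)
    -- canonical pairing on the fiber:
    let P : F → F → ℝ := fun p q => (1 / 2 : ℝ) * (p.2 q.1 + q.2 p.1)
    -- torsion of a field of fiber endomorphisms:
    let kappa : (V → (F →L[ℝ] F)) → (V → F) → (V → F) → (V → F) := fun Jf A B x =>
      courant (fun y => Jf y (A y)) (fun y => Jf y (B y)) x - courant A B x
        - Jf x (courant (fun y => Jf y (A y)) B x + courant A (fun y => Jf y (B y)) x)
    -- the standard constant frame:
    let e : Fin n ⊕ Fin n → (V → F) :=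
      Sum.elim (fun i => fun _ => (EuclideanSpace.single i 1, 0))
               (fun i => fun _ => ((0 : V), EuclideanSpace.proj i))
    ∀ Jm : V → (F →L[ℝ] F),
      ContDiffOn ℝ (⊤ : ℕ∞) Jm (Metric.ball (0 : V) 1) →
      (∀ x ∈ Metric.ball (0 : V) 1, ∀ p : F, Jm x (Jm x p) = -p) →
      (∀ x ∈ Metric.ball (0 : V) 1, ∀ p q : F, P (Jm x p) (Jm x q) = P p q) →
      (∀ t ∈ Set.Icc (0 : ℝ) 1, ∀ x ∈ Metric.ball (0 : V) 1, ∀ i j : Fin n ⊕ Fin n,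
          kappa (fun y => Jm (t • y)) (e i) (e j) x = t • kappa Jm (e i) (e j) (t • x))
      ∧ ((∀ x ∈ Metric.ball (0 : V) 1, ∀ i j : Fin n ⊕ Fin n, kappa Jm (e i) (e j) x = 0) →
          ∀ t ∈ Set.Icc (0 : ℝ) 1, ∀ x ∈ Metric.ball (0 : V) 1, ∀ i j : Fin n ⊕ Fin n,
            kappa (fun y => Jm (t • y)) (e i) (e j) x = 0) := by
  intro V F courant P kappa e Jm hsm hsq horth
  have key : ∀ t ∈ Set.Icc (0 : ℝ) 1, ∀ x ∈ Metric.ball (0 : V) 1, ∀ i j : Fin n ⊕ Fin n,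
      kappa (fun y => Jm (t • y)) (e i) (e j) x = t • kappa Jm (e i) (e j) (t • x) := by
    intro t ht x hx i j
    cases i <;> cases j <;>
      exact TorsionRescale.main Jm hsm t ht x hx _ _
  refine ⟨key, fun h0 t ht x hx i j => ?_⟩
  have hball : t • x ∈ Metric.ball (0 : V) 1 := by
    rw [mem_ball_zero_iff] at hx ⊢
    rw [norm_smul]
    calc ‖t‖ * ‖x‖ ≤ 1 * ‖x‖ := by
          apply mul_le_mul_of_nonneg_right _ (norm_nonneg x)
          rw [Real.norm_eq_abs, abs_le]; exact ⟨by linarith [ht.1], ht.2⟩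
      _ < 1 := by rwa [one_mul]
  rw [key t ht x hx i j, h0 (t • x) hball i j, smul_zero]
end
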